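/- Let A be a pro-p group obtained from a finitely generated pro-p group B by k successive proper pro-p HNN extensions with stable letters t₁,…,t_k and associated procyclic subgroups C_i = ⟨c_i⟩, C̃_i = ⟨c̃_i⟩ ≤ B (c_i^{t_i} = c̃_i). Then d(B) ≤ d(A) ≤ d(B) + k; moreover d(A) = d(B) if and only if the images of c_i⁻¹c̃_i (1 ≤ i ≤ k) in B/Φ(B) are linearly independent over 𝔽_p. -/

import Mathlib

/-- A pro-`p` group: a compact, Hausdorff, totally disconnected topological group in
which every open normal subgroup has `p`-power index. -/
def IsProP (p : ℕ) (G : Type*) [Group G] [TopologicalSpace G] : Prop :=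
  IsTopologicalGroup G ∧ CompactSpace G ∧ T2Space G ∧ TotallyDisconnectedSpace G ∧
    ∀ U : Subgroup G, U.Normal → IsOpen (U : Set G) → ∃ k : ℕ, U.index = p ^ k

/-- The minimal number of topological generators of a topological group. -/
noncomputable def topGenNum (G : Type*) [Group G] [TopologicalSpace G]
    [IsTopologicalGroup G] : ℕ :=
  sInf {n : ℕ | ∃ s : Fin n → G,
    (Subgroup.closure (Set.range s)).topologicalClosure = ⊤}

/-- A topological group is topologically finitely generated. -/
def TopFG (G : Type*) [Group G] [TopologicalSpace G] [IsTopologicalGroup G] : Prop :=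
  ∃ n : ℕ, ∃ s : Fin n → G,
    (Subgroup.closure (Set.range s)).topologicalClosure = ⊤

/-- `F` is a free pro-`p` group of rank `d`: it has a `d`-tuple of topological
generators which is universal for continuous maps to finite `p`-groups. -/
def IsFreeProP (p : ℕ) (F : Type*) [Group F] [TopologicalSpace F]
    [IsTopologicalGroup F] (d : ℕ) : Prop :=
  ∃ b : Fin d → F,
    (Subgroup.closure (Set.range b)).topologicalClosure = ⊤ ∧
    ∀ (P : Type) [Group P] [Finite P] [TopologicalSpace P] [DiscreteTopology P],
      IsPGroup p P → ∀ f : Fin d → P,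
        ∃! φ : F →* P, Continuous φ ∧ ∀ i, φ (b i) = f i

/-- The Frattini subgroup of a pro-`p` group: the closure of `[G,G]·G^p`. -/
def proFrattini (p : ℕ) (G : Type*) [Group G] [TopologicalSpace G]
    [IsTopologicalGroup G] : Subgroup G :=
  (commutator G ⊔ Subgroup.closure {x : G | ∃ g : G, g ^ p = x}).topologicalClosure

/-!
A continuous homomorphism `A → ℤ/p` is the same thing as one on `B` that agrees on `cᵢ` and
`c̃ᵢ`, together with arbitrary values on the stable letters `tᵢ`: this is the universal property
for the target `ℤ/p`, where the relation `cᵢ^{tᵢ} = c̃ᵢ` becomes `χ(cᵢ) = χ(c̃ᵢ)`. So the dual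
of `A/Φ(A)` is `ker e × 𝔽_p^k`, where `e` evaluates the characters of `B` at `uᵢ = cᵢ⁻¹c̃ᵢ`.
For a pro-`p` group `d(G) = dim (G/Φ(G))` (Burnside's basis theorem, which reduces to finite
`p`-groups, where every maximal subgroup has index `p`), hence `d(A) = d(B) - rank e + k`, and
`d(A) = d(B)` exactly when `e` is onto, i.e. when the `uᵢ` are independent modulo `Φ(B)`.
-/

open Module
open scoped commutatorElement

lemma exists_injective_pi_of_separating {K V ι : Type*} [Field K] [AddCommGroup V] [Module K V]
    [FiniteDimensional K V] (φ : ι → Dual K V) (hφ : ∀ v, (∀ i, φ i v = 0) → v = 0) :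
    ∃ s : Fin (finrank K V) → ι, Function.Injective (LinearMap.pi fun j => φ (s j)) := by
  have hspan : Submodule.span K (Set.range φ) = ⊤ := by
    by_contra hne
    obtain ⟨Φ, hΦ0, hΦ⟩ := Submodule.exists_le_ker_of_lt_top _ (lt_top_iff_ne_top.2 hne)
    obtain ⟨v, rfl⟩ := (evalEquiv K V).surjective Φ
    refine hΦ0 ?_
    rw [hφ v fun i => hΦ (Submodule.subset_span ⟨i, rfl⟩)]
    exact map_zero _
  -- a basis of `Dual K V` extracted from the `φ i` has `finrank K V` members
  obtain ⟨κ, a, -, hκspan, hκind⟩ := exists_linearIndependent' K φ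
  let b : Basis κ K (Dual K V) := Basis.mk hκind (by rw [hκspan, hspan])
  have hcard : finrank K V = Nat.card κ := by
    rw [← Subspace.dual_finrank_eq, finrank_eq_nat_card_basis b]
  have := Module.Finite.finite_basis b
  refine ⟨a ∘ (Finite.equivFin κ).symm ∘ Fin.cast hcard, ?_⟩
  rw [← LinearMap.ker_eq_bot, LinearMap.ker_pi, eq_bot_iff]
  intro v hv
  rw [Submodule.mem_iInf] at hv
  have hker : Submodule.span K (Set.range (φ ∘ a)) ≤ LinearMap.ker (Dual.eval K V v) :=
    Submodule.span_le.2 <| by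
      rintro - ⟨j, rfl⟩
      simpa using hv (Fin.cast hcard.symm (Finite.equivFin κ j))
  rw [hκspan, hspan, top_le_iff] at hker
  exact (forall_dual_apply_eq_zero_iff K v).1 fun ψ =>
    LinearMap.mem_ker.1 (show ψ ∈ LinearMap.ker (Dual.eval K V v) from hker ▸ Submodule.mem_top)

lemma LinearMap.range_eq_top_iff_forall_sum_mul {K V ι : Type*} [Field K] [AddCommGroup V]
    [Module K V] [Fintype ι] [DecidableEq ι] (e : V →ₗ[K] ι → K) :
    LinearMap.range e = ⊤ ↔ ∀ a : ι → K, (∀ v, ∑ i, a i * e v i = 0) → a = 0 := by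
  refine ⟨fun he a ha => funext fun i => ?_, fun h => ?_⟩
  · obtain ⟨v, hv⟩ := LinearMap.range_eq_top.1 he (Pi.single i 1)
    simpa [hv, Pi.single_apply] using ha v
  · by_contra hne
    obtain ⟨ψ, hψ0, hψ⟩ := Submodule.exists_le_ker_of_lt_top _ (lt_top_iff_ne_top.2 hne)
    have hψsum : ∀ w : ι → K, ψ w = ∑ i, ψ (Pi.single i 1) * w i := by
      intro w
      conv_lhs => rw [← Finset.univ_sum_single w, map_sum]
      refine Finset.sum_congr rfl fun i _ => ?_
      rw [mul_comm, ← smul_eq_mul, ← map_smul, ← Pi.single_smul', smul_eq_mul, mul_one]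
    have ha := h (fun i => ψ (Pi.single i 1)) fun v => by
      rw [← hψsum]; exact hψ ⟨v, rfl⟩
    exact hψ0 <| LinearMap.ext fun w => by
      simp [hψsum w, show ∀ i, ψ (Pi.single i 1) = 0 from congrFun ha]

def commutatorPow (p : ℕ) (G : Type*) [Group G] : Subgroup G :=
  commutator G ⊔ Subgroup.closure {x : G | ∃ g : G, g ^ p = x}

section CommutatorPow

variable {p : ℕ} {G : Type*} [Group G]

lemma commutator_le_commutatorPow : commutator G ≤ commutatorPow p G := le_sup_left

lemma pow_mem_commutatorPow (g : G) : g ^ p ∈ commutatorPow p G :=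
  Subgroup.mem_sup_right (Subgroup.subset_closure ⟨g, rfl⟩)

lemma commutatorPow_le_ker {P : Type*} [CommGroup P] (f : G →* P) (hP : ∀ y : P, y ^ p = 1) :
    commutatorPow p G ≤ f.ker := by
  refine sup_le (Abelianization.commutator_subset_ker f) ?_
  rw [Subgroup.closure_le]
  rintro - ⟨g, rfl⟩
  simp [hP]

lemma map_commutatorPow {Q : Type*} [Group Q] {f : G →* Q} (hf : Function.Surjective f) :
    (commutatorPow p G).map f = commutatorPow p Q := by
  rw [commutatorPow, commutatorPow, Subgroup.map_sup, commutator, commutator,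
    Subgroup.map_commutator, Subgroup.map_top_of_surjective f hf, MonoidHom.map_closure]
  congr 2
  ext y
  constructor
  · rintro ⟨-, ⟨g, rfl⟩, rfl⟩
    exact ⟨f g, (map_pow f g p).symm⟩
  · rintro ⟨q, rfl⟩
    obtain ⟨g, rfl⟩ := hf q
    exact ⟨g ^ p, ⟨g, rfl⟩, map_pow f g p⟩

variable [Fact p.Prime]

lemma exists_monoidHom_zmod_ne_one {E : Type*} [CommGroup E] (hE : ∀ y : E, y ^ p = 1)
    {y : E} (hy : y ≠ 1) : ∃ f : E →* Multiplicative (ZMod p), f y ≠ 1 := by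
  let _ : Module (ZMod p) (Additive E) :=
    AddCommGroup.zmodModule (n := p) fun a => congrArg Additive.ofMul (hE a.toMul)
  obtain ⟨φ, hφ⟩ : ∃ φ : Additive E →ₗ[ZMod p] ZMod p, φ (Additive.ofMul y) ≠ 0 := by
    by_contra! h
    exact hy ((forall_dual_apply_eq_zero_iff (ZMod p) _).1 h)
  exact ⟨AddMonoidHom.toMultiplicativeRight φ.toAddMonoidHom,
    fun h => hφ (congrArg Multiplicative.toAdd h)⟩

lemma exists_monoidHom_zmod_of_notMem {N : Subgroup G} (hN : commutatorPow p G ≤ N) {x : G}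
    (hx : x ∉ N) : ∃ f : G →* Multiplicative (ZMod p), N ≤ f.ker ∧ f x ≠ 1 := by
  have := Subgroup.Normal.of_commutator_le G (commutator_le_commutatorPow.trans hN)
  let _ : CommGroup (G ⧸ N) :=
    { mul_comm := by
        intro a b
        induction a using QuotientGroup.induction_on with | H a => ?_
        induction b using QuotientGroup.induction_on with | H b => ?_
        refine QuotientGroup.eq.2 (hN (commutator_le_commutatorPow ?_))
        rw [show (a * b)⁻¹ * (b * a) = ⁅b⁻¹, a⁻¹⁆ by group]
        exact Subgroup.commutator_mem_commutator (Subgroup.mem_top _) (Subgroup.mem_top _) }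
  have hexp : ∀ y : G ⧸ N, y ^ p = 1 := fun y => by
    induction y using QuotientGroup.induction_on with
    | H g => exact (QuotientGroup.eq_one_iff _).2 (hN (pow_mem_commutatorPow g))
  obtain ⟨f, hf⟩ := exists_monoidHom_zmod_ne_one hexp (mt (QuotientGroup.eq_one_iff x).1 hx)
  refine ⟨f.comp (QuotientGroup.mk' N), fun n hn => ?_, hf⟩
  simp [MonoidHom.mem_ker, (QuotientGroup.eq_one_iff n).2 hn]

end CommutatorPow

lemma Multiplicative.zmod_pow_eq_one {p : ℕ} (y : Multiplicative (ZMod p)) : y ^ p = 1 :=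
  Multiplicative.toAdd.injective (by simp [toAdd_pow, nsmul_eq_mul])

lemma MonoidHom.continuous_of_isOpen_le_ker {G P : Type*} [Group G] [TopologicalSpace G]
    [IsTopologicalGroup G] [Group P] [TopologicalSpace P] [DiscreteTopology P] (f : G →* P)
    {N : Subgroup G} (hN : IsOpen (N : Set G)) (hNf : N ≤ f.ker) : Continuous f :=
  continuous_of_continuousAt_one f <| by
    rw [ContinuousAt, map_one, nhds_discrete P, Filter.tendsto_pure]
    exact Filter.mem_of_superset (hN.mem_nhds N.one_mem) hNf

lemma isPGroup_multiplicative_zmod {p : ℕ} [Fact p.Prime] :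
    IsPGroup p (Multiplicative (ZMod p)) :=
  IsPGroup.of_card (n := 1) (by simp)

namespace IsPGroup

variable {p : ℕ} [Fact p.Prime] {Q : Type*} [Group Q] [Finite Q]

lemma card_quotient_eq_of_isCoatom (hQ : IsPGroup p Q) {M : Subgroup Q} [M.Normal]
    (hM : IsCoatom M) : Nat.card (Q ⧸ M) = p := by
  have : Nontrivial (Q ⧸ M) := QuotientGroup.nontrivial_iff.2 hM.1
  obtain ⟨n, hn, hcard⟩ := (hQ.to_quotient M).nontrivial_iff_card.1 this
  obtain ⟨z, hz⟩ := exists_prime_orderOf_dvd_card' (G := Q ⧸ M) p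
    (hcard ▸ dvd_pow_self p hn.ne')
  have hzM : M < (Subgroup.zpowers z).comap (QuotientGroup.mk' M) := by
    refine lt_of_le_of_ne (fun m hm => ?_) fun h => ?_
    · simp [(QuotientGroup.eq_one_iff m).2 hm]
    · obtain ⟨q, rfl⟩ := QuotientGroup.mk'_surjective M z
      have hq : q ∈ M := h ▸ Subgroup.mem_comap.2 (Subgroup.mem_zpowers _)
      rw [QuotientGroup.mk'_apply, (QuotientGroup.eq_one_iff q).2 hq, orderOf_one] at hz
      exact (Fact.out : p.Prime).one_lt.ne hz
  have hz_top : Subgroup.zpowers z = ⊤ := by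
    have hmk := QuotientGroup.mk'_surjective M
    rw [← Subgroup.map_comap_eq_self_of_surjective hmk (Subgroup.zpowers z), hM.2 _ hzM,
      Subgroup.map_top_of_surjective _ hmk]
  rw [← hz, ← Nat.card_zpowers, hz_top, Subgroup.card_top]

lemma commutatorPow_le_of_isCoatom (hQ : IsPGroup p Q) {M : Subgroup Q} (hM : IsCoatom M) :
    commutatorPow p Q ≤ M := by
  have := hQ.isNilpotent
  have : M.Normal :=
    Subgroup.NormalizerCondition.normal_of_coatom M Group.normalizerCondition_of_isNilpotent hM
  have hcard := hQ.card_quotient_eq_of_isCoatom hM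
  have : IsCyclic (Q ⧸ M) := isCyclic_of_prime_card (p := p) hcard
  let _ : CommGroup (Q ⧸ M) := IsCyclic.commGroup
  simpa using commutatorPow_le_ker (p := p) (QuotientGroup.mk' M)
    fun y => hcard ▸ pow_card_eq_one'

lemma commutatorPow_le_frattini (hQ : IsPGroup p Q) : commutatorPow p Q ≤ frattini Q := by
  rw [frattini, Order.radical]
  exact le_iInf₂ fun _ hM => hQ.commutatorPow_le_of_isCoatom hM

lemma eq_top_of_sup_commutatorPow_eq_top (hQ : IsPGroup p Q) {K : Subgroup Q}
    (hK : K ⊔ commutatorPow p Q = ⊤) : K = ⊤ :=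
  frattini_nongenerating <| top_unique <| hK ▸ sup_le_sup_left hQ.commutatorPow_le_frattini K

end IsPGroup

namespace IsProP

variable {p : ℕ} {G : Type*} [Group G] [TopologicalSpace G] [IsTopologicalGroup G]

lemma exists_open_normal_subset (hG : IsProP p G) {W : Set G} (hW : IsOpen W)
    (h1 : (1 : G) ∈ W) : ∃ N : Subgroup G, N.Normal ∧ IsOpen (N : Set G) ∧ (N : Set G) ⊆ W := by
  obtain ⟨-, _, _, _, -⟩ := hG
  obtain ⟨V, hV, h1V, hVW⟩ := compact_exists_isClopen_in_isOpen hW h1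
  obtain ⟨N, hN⟩ := IsTopologicalGroup.exist_openNormalSubgroup_sub_clopen_nhds_of_one hV h1V
  exact ⟨N.toSubgroup, N.isNormal', N.isOpen', hN.trans hVW⟩

lemma exists_open_normal_notMem_sup (hG : IsProP p G) {S : Subgroup G} {x : G}
    (hx : x ∉ S.topologicalClosure) :
    ∃ N : Subgroup G, N.Normal ∧ IsOpen (N : Set G) ∧ x ∉ N ⊔ S := by
  obtain ⟨N, hN, hNo, hNW⟩ := hG.exists_open_normal_subset
    (S.isClosed_topologicalClosure.isOpen_compl.preimage (continuous_mul_const x))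
    (by rw [Set.mem_preimage, one_mul]; exact hx)
  refine ⟨N, hN, hNo, fun hxNS => ?_⟩
  rw [← SetLike.mem_coe, Subgroup.normal_mul] at hxNS
  obtain ⟨n, hn, s, hs, rfl⟩ := hxNS
  have hs' := hNW (N.inv_mem hn)
  rw [Set.mem_preimage, inv_mul_cancel_left] at hs'
  exact hs' (S.le_topologicalClosure hs)

omit [IsTopologicalGroup G] in
lemma isPGroup_quotient (hG : IsProP p G) {N : Subgroup G} [N.Normal]
    (hN : IsOpen (N : Set G)) : IsPGroup p (G ⧸ N) :=
  have ⟨_, hk⟩ := hG.2.2.2.2 N inferInstance hN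
  IsPGroup.of_card hk

variable [Fact p.Prime]

lemma topologicalClosure_eq_top_of_sup_commutatorPow (hG : IsProP p G) {H : Subgroup G}
    (h : (H ⊔ commutatorPow p G).topologicalClosure = ⊤) : H.topologicalClosure = ⊤ := by
  by_contra hH
  obtain ⟨x, hx⟩ := SetLike.exists_not_mem_of_ne_top _ hH
  obtain ⟨N, hN, hNo, hxN⟩ := hG.exists_open_normal_notMem_sup hx
  have hK : (N ⊔ H) ⊔ commutatorPow p G = ⊤ := by
    have hopen : IsOpen ((N ⊔ H ⊔ commutatorPow p G : Subgroup G) : Set G) :=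
      Subgroup.isOpen_mono (le_sup_left.trans le_sup_left) hNo
    exact top_unique <| h ▸ Subgroup.topologicalClosure_minimal _
      (sup_le_sup_right le_sup_right _) (Subgroup.isClosed_of_isOpen _ hopen)
  have := hG.2.1
  have := Subgroup.quotient_finite_of_isOpen N hNo
  have hQ := (hG.isPGroup_quotient hNo).eq_top_of_sup_commutatorPow_eq_top
    (K := (N ⊔ H).map (QuotientGroup.mk' N)) <| by
      rw [← map_commutatorPow (QuotientGroup.mk'_surjective N), ← Subgroup.map_sup, hK,
        Subgroup.map_top_of_surjective _ (QuotientGroup.mk'_surjective N)]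
  apply hxN
  rw [← sup_eq_right.2 (le_sup_left : N ≤ N ⊔ H), ← QuotientGroup.comap_map_mk', hQ]
  exact Subgroup.mem_top x

lemma exists_continuous_hom_of_notMem (hG : IsProP p G) {S : Subgroup G}
    (hS : commutatorPow p G ≤ S) {x : G} (hx : x ∉ S.topologicalClosure) :
    ∃ f : G →* Multiplicative (ZMod p), Continuous f ∧ S ≤ f.ker ∧ f x ≠ 1 := by
  obtain ⟨N, -, hNo, hxN⟩ := hG.exists_open_normal_notMem_sup hx
  obtain ⟨f, hf, hfx⟩ := exists_monoidHom_zmod_of_notMem (hS.trans le_sup_right) hxN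
  exact ⟨f, f.continuous_of_isOpen_le_ker hNo (le_sup_left.trans hf),
    le_sup_right.trans hf, hfx⟩

lemma exists_continuous_hom_ne_one (hG : IsProP p G) {H : Subgroup G}
    (hH : H.topologicalClosure ≠ ⊤) :
    ∃ f : G →* Multiplicative (ZMod p), Continuous f ∧ H ≤ f.ker ∧ f ≠ 1 := by
  obtain ⟨x, hx⟩ := SetLike.exists_not_mem_of_ne_top _
    (mt hG.topologicalClosure_eq_top_of_sup_commutatorPow hH)
  obtain ⟨f, hf, hHf, hfx⟩ := hG.exists_continuous_hom_of_notMem le_sup_right hx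
  exact ⟨f, hf, le_sup_left.trans hHf, fun h => hfx (h ▸ rfl)⟩

lemma mem_proFrattini_iff (hG : IsProP p G) {z : G} :
    z ∈ proFrattini p G ↔ ∀ f : G →* Multiplicative (ZMod p), Continuous f → f z = 1 := by
  refine ⟨fun hz f hf => ?_, fun h => ?_⟩
  · exact Subgroup.topologicalClosure_minimal _
      (commutatorPow_le_ker f Multiplicative.zmod_pow_eq_one)
      ((isClosed_discrete {1}).preimage hf) hz
  · by_contra hz
    obtain ⟨f, hf, -, hfz⟩ := hG.exists_continuous_hom_of_notMem le_rfl hz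
    exact hfz (h f hf)

end IsProP

-- The `𝔽_p`-dual of `G/Φ(G)`.
abbrev ContChar (p : ℕ) (G : Type*) [Group G] [TopologicalSpace G] : Type _ :=
  Additive (G →ₜ* Multiplicative (ZMod p))

namespace ContChar

variable {p : ℕ} [Fact p.Prime] {G : Type*} [Group G] [TopologicalSpace G]

instance : Module (ZMod p) (ContChar p G) :=
  AddCommGroup.zmodModule (n := p) fun χ =>
    Additive.toMul.injective <| ContinuousMonoidHom.ext fun g => by
      simpa [toMul_nsmul] using Multiplicative.zmod_pow_eq_one (χ.toMul g)

def eval (g : G) : ContChar p G →ₗ[ZMod p] ZMod p :=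
  AddMonoidHom.toZModLinearMap p
    { toFun := fun χ => (χ.toMul g).toAdd
      map_zero' := rfl
      map_add' := fun _ _ => rfl }

@[simp]
lemma eval_apply (g : G) (χ : ContChar p G) : eval g χ = (χ.toMul g).toAdd := rfl

lemma eq_zero_of_eval {χ : ContChar p G} (h : ∀ g, eval g χ = 0) : χ = 0 :=
  Additive.toMul.injective <| ContinuousMonoidHom.ext fun g => congrArg Multiplicative.ofAdd (h g)

def evalAt {ι : Type*} (x : ι → G) : ContChar p G →ₗ[ZMod p] (ι → ZMod p) :=
  LinearMap.pi fun i => eval (x i)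

@[simp]
lemma evalAt_apply {ι : Type*} (x : ι → G) (χ : ContChar p G) (i : ι) :
    evalAt x χ i = (χ.toMul (x i)).toAdd := rfl

lemma eval_list_prod_pow {k : ℕ} (u : Fin k → G) (m : Fin k → ℕ) (χ : ContChar p G) :
    eval ((List.finRange k).map fun i => u i ^ m i).prod χ =
      ∑ i, (m i : ZMod p) * evalAt u χ i := by
  simp [map_list_prod, List.map_map, Function.comp_def, ← Fin.prod_univ_def, toAdd_prod,
    toAdd_pow, nsmul_eq_mul]

variable [IsTopologicalGroup G]

lemma evalAt_injective {ι : Type*} {x : ι → G}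
    (hx : (Subgroup.closure (Set.range x)).topologicalClosure = ⊤) :
    Function.Injective (evalAt (p := p) x) := by
  refine (injective_iff_map_eq_zero _).2 fun χ hχ => Additive.toMul.injective ?_
  have hdense : Dense (Subgroup.closure (Set.range x) : Set G) := by
    rw [dense_iff_closure_eq, ← Subgroup.topologicalClosure_coe, hx, Subgroup.coe_top]
  refine ContinuousMonoidHom.toContinuousMap_injective <| ContinuousMap.ext <| congrFun <|
    Continuous.ext_on hdense (map_continuous χ.toMul) continuous_const ?_
  refine MonoidHom.eqOn_closure (f := χ.toMul.toMonoidHom) (g := 1) ?_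
  rintro - ⟨i, rfl⟩
  exact congrArg Multiplicative.ofAdd (congrFun hχ i)

lemma finiteDimensional_of_topFG (hG : TopFG G) : FiniteDimensional (ZMod p) (ContChar p G) :=
  have ⟨_, _, hx⟩ := hG
  FiniteDimensional.of_injective _ (evalAt_injective hx)

end ContChar

namespace IsProP

open ContChar

variable {p : ℕ} [Fact p.Prime] {G : Type*} [Group G] [TopologicalSpace G] [IsTopologicalGroup G]

lemma closure_range_eq_top_of_evalAt_injective (hG : IsProP p G) {ι : Type*} {x : ι → G}
    (hx : Function.Injective (evalAt (p := p) x)) :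
    (Subgroup.closure (Set.range x)).topologicalClosure = ⊤ := by
  by_contra h
  obtain ⟨f, hf, hker, hf1⟩ := hG.exists_continuous_hom_ne_one h
  have hχ : evalAt x (Additive.ofMul ⟨f, hf⟩) = 0 := funext fun i =>
    congrArg Multiplicative.toAdd (hker (Subgroup.subset_closure ⟨i, rfl⟩))
  exact hf1 (MonoidHom.ext fun g =>
    congrArg (fun χ : ContChar p G => χ.toMul g) (hx (hχ.trans (map_zero _).symm)))

-- When `G` is not finitely generated, both sides are the junk value `0`.
lemma topGenNum_eq_finrank (hG : IsProP p G) :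
    topGenNum G = finrank (ZMod p) (ContChar p G) := by
  by_cases hfin : FiniteDimensional (ZMod p) (ContChar p G)
  · obtain ⟨s, hs⟩ := exists_injective_pi_of_separating (fun g : G => eval (p := p) g)
      fun χ => eq_zero_of_eval
    have hgen := hG.closure_range_eq_top_of_evalAt_injective (x := s) hs
    refine le_antisymm (Nat.sInf_le ⟨s, hgen⟩) (le_csInf ⟨_, s, hgen⟩ ?_)
    rintro n ⟨y, hy⟩
    simpa using LinearMap.finrank_le_finrank_of_injective (evalAt_injective (p := p) hy)
  · rw [finrank_of_not_finite hfin, topGenNum, Nat.sInf_eq_zero]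
    exact Or.inr <| Set.eq_empty_of_forall_notMem fun n ⟨y, hy⟩ =>
      hfin (FiniteDimensional.of_injective _ (evalAt_injective hy))

lemma mem_proFrattini_iff_eval (hG : IsProP p G) {z : G} :
    z ∈ proFrattini p G ↔ ∀ χ : ContChar p G, eval z χ = 0 := by
  rw [hG.mem_proFrattini_iff]
  refine ⟨fun h χ => ?_, fun h f hf => ?_⟩
  · simpa using congrArg Multiplicative.toAdd (h χ.toMul.toMonoidHom χ.toMul.continuous)
  · exact congrArg Multiplicative.ofAdd (h (Additive.ofMul ⟨f, hf⟩))

end IsProP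

namespace ContChar

variable {p : ℕ} [Fact p.Prime] {A B : Type*} [Group A] [TopologicalSpace A] [Group B]
  [TopologicalSpace B]

lemma eval_inv_mul_eq_zero_iff {χ : ContChar p B} {a b : B} :
    eval (a⁻¹ * b) χ = 0 ↔ χ.toMul a = χ.toMul b := by
  rw [eval_apply, toAdd_eq_zero, map_mul, map_inv, inv_mul_eq_one]

def comap (ι : B →ₜ* A) : ContChar p A →ₗ[ZMod p] ContChar p B :=
  AddMonoidHom.toZModLinearMap p
    { toFun := fun χ => Additive.ofMul (χ.toMul.comp ι)
      map_zero' := rfl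
      map_add' := fun _ _ => rfl }

lemma finrank_eq_of_isHNN [FiniteDimensional (ZMod p) (ContChar p B)] {k : ℕ} (ι : B →* A)
    (hι : Continuous ι) (c c' : Fin k → B) (t : Fin k → A)
    (hrel : ∀ i, (t i)⁻¹ * ι (c i) * t i = ι (c' i))
    (huniv : ∀ f : B →* Multiplicative (ZMod p), Continuous f →
      ∀ s : Fin k → Multiplicative (ZMod p), (∀ i, f (c i) = f (c' i)) →
        ∃! φ : A →* Multiplicative (ZMod p), Continuous φ ∧ φ.comp ι = f ∧ ∀ i, φ (t i) = s i) :
    finrank (ZMod p) (ContChar p A) =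
      finrank (ZMod p) (LinearMap.ker (evalAt (p := p) fun i => (c i)⁻¹ * c' i)) + k := by
  set e := evalAt (p := p) fun i => (c i)⁻¹ * c' i
  have hres : ∀ χ, comap ⟨ι, hι⟩ χ ∈ LinearMap.ker e := fun χ => funext fun i =>
    eval_inv_mul_eq_zero_iff.2
      (by simpa using congrArg χ.toMul (hrel i) : χ.toMul (ι (c i)) = χ.toMul (ι (c' i)))
  let Θ : ContChar p A →ₗ[ZMod p] LinearMap.ker e × (Fin k → ZMod p) :=
    ((comap ⟨ι, hι⟩).codRestrict _ hres).prod (evalAt t)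
  have hΘ : Function.Bijective Θ := by
    refine (Function.bijective_iff_existsUnique _).2 fun ⟨⟨f, hf⟩, s⟩ => ?_
    obtain ⟨φ, ⟨hφc, hφι, hφt⟩, huniq⟩ := huniv f.toMul.toMonoidHom f.toMul.continuous
      (fun i => Multiplicative.ofAdd (s i)) fun i => eval_inv_mul_eq_zero_iff.1 (congrFun hf i)
    refine ⟨Additive.ofMul ⟨φ, hφc⟩, ?_, fun χ hχ => ?_⟩
    · exact Prod.ext
        (Subtype.ext <| Additive.toMul.injective <| ContinuousMonoidHom.ext fun b =>
          DFunLike.congr_fun hφι b)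
        (funext fun i => congrArg Multiplicative.toAdd (hφt i))
    · have hχι : χ.toMul.toMonoidHom.comp ι = f.toMul.toMonoidHom := MonoidHom.ext fun b =>
        DFunLike.congr_fun (congrArg (fun q => (q.1 : ContChar p B).toMul) hχ) b
      have hχt : ∀ i, χ.toMul (t i) = Multiplicative.ofAdd (s i) := fun i =>
        congrArg Multiplicative.ofAdd (congrFun (congrArg Prod.snd hχ) i)
      have := huniq χ.toMul.toMonoidHom ⟨χ.toMul.continuous, hχι, hχt⟩
      exact Additive.toMul.injective <| ContinuousMonoidHom.ext fun a => DFunLike.congr_fun this a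
  rw [(LinearEquiv.ofBijective Θ hΘ).finrank_eq, finrank_prod, finrank_fin_fun]

end ContChar

theorem rank_iterated_proP_HNN_extension_general
    {p : ℕ} (hp : p.Prime)
    {B : Type*} [Group B] [TopologicalSpace B] [IsTopologicalGroup B]
    {A : Type*} [Group A] [TopologicalSpace A] [IsTopologicalGroup A]
    (hB : IsProP p B) (hA : IsProP p A) (hfgB : TopFG B)
    {k : ℕ} (ι : B →* A) (hιcont : Continuous ι)
    (c c' : Fin k → B) (t : Fin k → A)
    (hrel : ∀ i, (t i)⁻¹ * ι (c i) * t i = ι (c' i))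
    (huniv : ∀ (P : Type) [Group P] [Finite P] [TopologicalSpace P]
      [DiscreteTopology P], IsPGroup p P →
      ∀ (f : B →* P), Continuous f → ∀ s : Fin k → P,
        (∀ i, (s i)⁻¹ * f (c i) * s i = f (c' i)) →
        ∃! φ : A →* P, Continuous φ ∧ φ.comp ι = f ∧ ∀ i, φ (t i) = s i) :
    (topGenNum B ≤ topGenNum A ∧ topGenNum A ≤ topGenNum B + k) ∧
    (topGenNum A = topGenNum B ↔
      ∀ m : Fin k → ℕ,
        ((List.finRange k).map (fun i => ((c i)⁻¹ * c' i) ^ m i)).prod ∈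
            proFrattini p B →
          ∀ i, (m i : ZMod p) = 0) := by
  have : Fact p.Prime := ⟨hp⟩
  set e := ContChar.evalAt (p := p) fun i => (c i)⁻¹ * c' i
  have := ContChar.finiteDimensional_of_topFG (p := p) hfgB
  have hdimA : finrank (ZMod p) (ContChar p A) = finrank (ZMod p) (LinearMap.ker e) + k :=
    ContChar.finrank_eq_of_isHNN ι hιcont c c' t hrel fun f hf s hs =>
      huniv _ isPGroup_multiplicative_zmod f hf s fun i => by simp [hs i]
  have hrank := LinearMap.finrank_range_add_finrank_ker e
  have hrange : finrank (ZMod p) (LinearMap.range e) ≤ k :=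
    (Submodule.finrank_le _).trans (finrank_fin_fun _).le
  rw [hA.topGenNum_eq_finrank, hB.topGenNum_eq_finrank]
  refine ⟨⟨by omega, by omega⟩, ?_⟩
  calc finrank (ZMod p) (ContChar p A) = finrank (ZMod p) (ContChar p B)
      ↔ finrank (ZMod p) (LinearMap.range e) = finrank (ZMod p) (Fin k → ZMod p) := by
        rw [finrank_fin_fun]; omega
    _ ↔ LinearMap.range e = ⊤ := ⟨Submodule.eq_top_of_finrank_eq, fun h => h ▸ finrank_top _ _⟩
    _ ↔ ∀ a : Fin k → ZMod p, (∀ χ, ∑ i, a i * e χ i = 0) → a = 0 :=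
        e.range_eq_top_iff_forall_sum_mul
    _ ↔ _ := by
        simp_rw [hB.mem_proFrattini_iff_eval, ContChar.eval_list_prod_pow, funext_iff]
        exact (Function.Surjective.forall fun a => ⟨fun i => (a i).val, by simp⟩)

/-- Let `A` be a pro-`p` group obtained from a finitely generated
pro-`p` group `B` by `k` successive proper pro-`p` HNN extensions with stable letters
`t₁, …, t_k` and associated procyclic subgroups `C_i = ⟨c_i⟩`, `C̃_i = ⟨c̃_i⟩ ≤ B`
(with `c_i^{t_i} = c̃_i`); `A` is characterized by its universal property for
continuous maps to finite `p`-groups.  Then `d(B) ≤ d(A) ≤ d(B) + k`; moreover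
`d(A) = d(B)` if and only if the images of `c_i⁻¹·c̃_i` (`1 ≤ i ≤ k`) in `B/Φ(B)`
are linearly independent over `𝔽_p`. -/
theorem rank_iterated_proP_HNN_extension
    {p : ℕ} (hp : p.Prime)
    {B : Type*} [Group B] [TopologicalSpace B] [IsTopologicalGroup B]
    {A : Type*} [Group A] [TopologicalSpace A] [IsTopologicalGroup A]
    (hB : IsProP p B) (hA : IsProP p A) (hfgB : TopFG B)
    {k : ℕ} (ι : B →* A) (hιcont : Continuous ι) (hιinj : Function.Injective ι)
    (c c' : Fin k → B) (t : Fin k → A)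
    (hrel : ∀ i, (t i)⁻¹ * ι (c i) * t i = ι (c' i))
    (huniv : ∀ (P : Type) [Group P] [Finite P] [TopologicalSpace P]
      [DiscreteTopology P], IsPGroup p P →
      ∀ (f : B →* P), Continuous f → ∀ s : Fin k → P,
        (∀ i, (s i)⁻¹ * f (c i) * s i = f (c' i)) →
        ∃! φ : A →* P, Continuous φ ∧ φ.comp ι = f ∧ ∀ i, φ (t i) = s i) :
    (topGenNum B ≤ topGenNum A ∧ topGenNum A ≤ topGenNum B + k) ∧
    (topGenNum A = topGenNum B ↔
      ∀ m : Fin k → ℕ,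
        ((List.finRange k).map (fun i => ((c i)⁻¹ * c' i) ^ m i)).prod ∈
            proFrattini p B →
          ∀ i, (m i : ZMod p) = 0) :=
  rank_iterated_proP_HNN_extension_general hp hB hA hfgB ι hιcont c c' t hrel huniv
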